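/- arXiv:2008.09992 — 2 statements merged into one kernel-verified Lean document; each statement's English description precedes it below -/
import Mathlib

section
/- For k = 4, the only integers v₀ ≥ 5, m ≥ 2, s ≥ 2 satisfying (v₀^m − 1)(v₀^m − 2) ≤ k(k−1)(k−2) · (m(v₀−1)/(s−1)) · (m(v₀−1)/(s−1) − 1) are (m,s) = (2,2) with v₀ ∈ {5,6,7,8}. -/
/-- For `v ≥ 5`, `m ≥ 3`, we have `5m(v-1)+2 ≤ v^m` (over ℚ). -/
lemma aux_pow_ge (v : ℕ) (hv : 5 ≤ v) : ∀ m : ℕ, 3 ≤ m →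
    5 * (m : ℚ) * ((v : ℚ) - 1) + 2 ≤ (v : ℚ) ^ m := by
  have hV : (5 : ℚ) ≤ (v : ℚ) := by exact_mod_cast hv
  intro m hm
  induction m, hm using Nat.le_induction with
  | base => push_cast; nlinarith [sq_nonneg ((v:ℚ) - 5)]
  | succ n hn ih =>
      have hn' : (3 : ℚ) ≤ (n : ℚ) := by exact_mod_cast hn
      have : (v : ℚ) ^ (n + 1) = (v : ℚ) ^ n * (v : ℚ) := by ring
      rw [this]
      push_cast
      nlinarith [mul_le_mul_of_nonneg_right ih (by linarith : (0:ℚ) ≤ (v:ℚ)),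
        mul_nonneg (by linarith : (0:ℚ) ≤ (n:ℚ) - 3) (sq_nonneg ((v:ℚ) - 1)),
        sq_nonneg ((v:ℚ) - 1), hV, hn']

/-- For `k = 4`: the only integers `v₀ ≥ 5`, `m ≥ 2`, `s ≥ 2` satisfying
`(v₀^m − 1)(v₀^m − 2) ≤ 4·3·2·D·(D−1)` with `D = m(v₀−1)/(s−1)` (as a rational)
are `(m,s) = (2,2)` with `v₀ ∈ {5,6,7,8}`. -/
theorem stmt_7 (v₀ m s : ℕ) (hv : 5 ≤ v₀) (hm : 2 ≤ m) (hs : 2 ≤ s) :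
    (((v₀ : ℚ) ^ m - 1) * ((v₀ : ℚ) ^ m - 2) ≤
        4 * 3 * 2 * ((m : ℚ) * ((v₀ : ℚ) - 1) / ((s : ℚ) - 1)) *
          ((m : ℚ) * ((v₀ : ℚ) - 1) / ((s : ℚ) - 1) - 1)) ↔
      (m = 2 ∧ s = 2 ∧ (v₀ = 5 ∨ v₀ = 6 ∨ v₀ = 7 ∨ v₀ = 8)) := by
  have hV : (5 : ℚ) ≤ (v₀ : ℚ) := by exact_mod_cast hv
  have hM : (2 : ℚ) ≤ (m : ℚ) := by exact_mod_cast hm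
  have hS : (2 : ℚ) ≤ (s : ℚ) := by exact_mod_cast hs
  have hs1 : (1 : ℚ) ≤ (s : ℚ) - 1 := by linarith
  have hs1pos : (0 : ℚ) < (s : ℚ) - 1 := by linarith
  set M : ℚ := (m : ℚ) * ((v₀ : ℚ) - 1) with hMdef
  set D : ℚ := M / ((s : ℚ) - 1) with hDdef
  have hMge : (8 : ℚ) ≤ M := by nlinarith
  have hDle : D ≤ M := by
    rw [hDdef, div_le_iff₀ hs1pos]; nlinarith
  have hDnn : 0 ≤ D := by positivity
  have hDD : 4 * 3 * 2 * D * (D - 1) ≤ 24 * M * (M - 1) := by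
    nlinarith [hDle, hDnn, hMge]
  constructor
  · intro h
    -- first show m = 2
    have hm2 : m = 2 := by
      by_contra hne
      have hm3 : 3 ≤ m := by omega
      have key := aux_pow_ge v₀ hv m hm3
      have : ((v₀ : ℚ) ^ m - 1) * ((v₀ : ℚ) ^ m - 2) ≤ 24 * M * (M - 1) := by
        calc _ ≤ 4 * 3 * 2 * D * (D - 1) := h
          _ ≤ _ := hDD
      nlinarith [key, hMge]
    subst hm2
    -- now m = 2
    have hs2 : s = 2 := by
      by_contra hne
      have hs3 : 3 ≤ s := by omega
      have hS3 : (3 : ℚ) ≤ (s : ℚ) := by exact_mod_cast hs3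
      have hDle2 : D ≤ (v₀ : ℚ) - 1 := by
        rw [hDdef, div_le_iff₀ hs1pos, hMdef]
        push_cast
        nlinarith
      have h2 : ((v₀ : ℚ) ^ 2 - 1) * ((v₀ : ℚ) ^ 2 - 2) ≤
          24 * ((v₀ : ℚ) - 1) * ((v₀ : ℚ) - 2) := by
        have hbound : 4 * 3 * 2 * D * (D - 1) ≤ 24 * ((v₀:ℚ) - 1) * ((v₀:ℚ) - 2) := by
          nlinarith [hDle2, hDnn, hV]
        calc _ ≤ 4 * 3 * 2 * D * (D - 1) := h
          _ ≤ _ := hbound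
      have h5 : (0:ℚ) ≤ (v₀:ℚ) - 5 := by linarith
      nlinarith [h2, hV, mul_nonneg (mul_nonneg h5 h5) h5, sq_nonneg ((v₀:ℚ) - 5),
        mul_nonneg (mul_nonneg (mul_nonneg h5 h5) h5) h5]
    subst hs2
    refine ⟨rfl, rfl, ?_⟩
    -- D = 2(v₀-1); inequality: (v₀²-1)(v₀²-2) ≤ 48(v₀-1)(2(v₀-1)-1)
    have hD2 : D = 2 * ((v₀ : ℚ) - 1) := by
      rw [hDdef, hMdef]; norm_num
    rw [hD2] at h
    have hle8 : v₀ ≤ 8 := by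
      by_contra hgt
      have h9 : 9 ≤ v₀ := by omega
      have hV9 : (9 : ℚ) ≤ (v₀ : ℚ) := by exact_mod_cast h9
      push_cast at h
      have h9' : (0:ℚ) ≤ (v₀:ℚ) - 9 := by linarith
      nlinarith [h, hV9, mul_nonneg (mul_nonneg h9' h9') h9', sq_nonneg ((v₀:ℚ) - 9),
        mul_nonneg (mul_nonneg (mul_nonneg h9' h9') h9') h9']
    interval_cases v₀ <;> simp
  · rintro ⟨rfl, rfl, h⟩
    rcases h with rfl | rfl | rfl | rfl <;> norm_num
end

section
/- Let x = (x₁,…,x_d) be a partition recording intersection sizes of a k-set with d imprimitivity classes each of size c, so Σxᵢ = k and v = cd. The orbit design D* = (P, B^{S_c ≀ S_d}) is a 2-design if and only if Σ xᵢ(xᵢ−1) = k(k−1)(c−1)/(v−1). -/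
/-! The wreath product `S_c ≀ S_d` has exactly two orbits on ordered pairs of distinct points:
pairs inside one class and pairs meeting two classes. So the number of blocks through two points
takes only two values `λ₌` and `λ≠`, and double counting the incidences between blocks and pairs
of each kind gives `d c (c - 1) λ₌ = N S` and `c d c (d - 1) λ≠ = N (k (k - 1) - S)`, where `N` is
the number of blocks and `S = Σ xᵢ (xᵢ - 1)` counts the pairs of `B` inside a class. The design
condition `λ₌ = λ≠` is therefore a linear equation in `S`. -/

open Finset Equiv
open scoped Pointwise

section OrbitDesign

variable {G α : Type*} [Group G] [MulAction G α] [DecidableEq α] {B C : Finset α}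

lemma card_filter_mem_smul_finset {S : Finset (α × α)} (hS : ∀ g : G, ∀ x ∈ S, g • x ∈ S)
    (g : G) : #{x ∈ S | x.1 ∈ g • B ∧ x.2 ∈ g • B} = #{x ∈ S | x.1 ∈ B ∧ x.2 ∈ B} := by
  have hS' : ∀ x, g • x ∈ S ↔ x ∈ S := fun x =>
    ⟨fun h => by simpa using hS g⁻¹ _ h, hS g x⟩
  exact (card_equiv (MulAction.toPerm g : Perm (α × α)) fun x => by
    simp [hS', smul_mem_smul_finset_iff]).symm

variable (G) [Fintype G]

def orbitBlocks (B : Finset α) : Finset (Finset α) :=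
  univ.image fun g : G => g • B

def pairCount (B : Finset α) (p q : α) : ℕ :=
  #{C ∈ orbitBlocks G B | p ∈ C ∧ q ∈ C}

variable {G}

lemma mem_orbitBlocks : C ∈ orbitBlocks G B ↔ ∃ g : G, g • B = C := by
  simp [orbitBlocks]

lemma self_mem_orbitBlocks : B ∈ orbitBlocks G B :=
  mem_orbitBlocks.2 ⟨1, one_smul G B⟩

lemma smul_mem_orbitBlocks_iff (g : G) : g • C ∈ orbitBlocks G B ↔ C ∈ orbitBlocks G B := by
  simp only [mem_orbitBlocks]
  constructor
  · rintro ⟨h, hh⟩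
    exact ⟨g⁻¹ * h, by rw [mul_smul, hh, inv_smul_smul]⟩
  · rintro ⟨h, rfl⟩
    exact ⟨g * h, mul_smul g h B⟩

lemma pairCount_smul (g : G) (p q : α) : pairCount G B (g • p) (g • q) = pairCount G B p q :=
  (card_equiv (MulAction.toPerm g : Perm (Finset α)) fun C => by
    simp [smul_mem_orbitBlocks_iff, smul_mem_smul_finset_iff]).symm

theorem sum_pairCount {S : Finset (α × α)} (hS : ∀ g : G, ∀ x ∈ S, g • x ∈ S) :
    ∑ x ∈ S, pairCount G B x.1 x.2 = #(orbitBlocks G B) * #{x ∈ S | x.1 ∈ B ∧ x.2 ∈ B} := by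
  calc ∑ x ∈ S, pairCount G B x.1 x.2
      = ∑ C ∈ orbitBlocks G B, #{x ∈ S | x.1 ∈ C ∧ x.2 ∈ C} :=
        sum_card_bipartiteAbove_eq_sum_card_bipartiteBelow
          fun (x : α × α) (C : Finset α) => x.1 ∈ C ∧ x.2 ∈ C
    _ = #(orbitBlocks G B) * #{x ∈ S | x.1 ∈ B ∧ x.2 ∈ B} := by
        refine sum_const_nat fun C hC => ?_
        obtain ⟨g, rfl⟩ := mem_orbitBlocks.1 hC
        exact card_filter_mem_smul_finset hS g

theorem card_mul_pairCount {S : Finset (α × α)} (hS : ∀ g : G, ∀ x ∈ S, g • x ∈ S)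
    (htrans : ∀ x ∈ S, ∀ y ∈ S, ∃ g : G, g • x = y) {x : α × α} (hx : x ∈ S) :
    #S * pairCount G B x.1 x.2 = #(orbitBlocks G B) * #{y ∈ S | y.1 ∈ B ∧ y.2 ∈ B} := by
  rw [← sum_pairCount hS, ← smul_eq_mul, ← sum_const]
  refine sum_congr rfl fun y hy => ?_
  obtain ⟨g, rfl⟩ := htrans x hx y hy
  exact (pairCount_smul g x.1 x.2).symm

end OrbitDesign

namespace Equiv.Perm

variable {β γ : Type*}

lemma prodShear_mul_prodShear (π π' : Perm β) (τ τ' : β → Perm γ) :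
    π.prodShear τ * π'.prodShear τ' = (π * π').prodShear fun i => τ (π' i) * τ' i := by
  ext <;> rfl

lemma prodShear_inv (π : Perm β) (τ : β → Perm γ) :
    (π.prodShear τ)⁻¹ = π⁻¹.prodShear fun i => (τ (π⁻¹ i))⁻¹ := by
  rw [inv_eq_iff_mul_eq_one, prodShear_mul_prodShear]
  ext x <;> simp

end Equiv.Perm

lemma cast_card_offDiag {α : Type*} [DecidableEq α] (s : Finset α) :
    (#s.offDiag : ℚ) = #s * (#s - 1) := by
  rw [offDiag_card, Nat.cast_sub (Nat.le_mul_self _)]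
  push_cast
  ring

section ClassPairs

variable {β γ : Type*} [DecidableEq β] [DecidableEq γ]

def sameClassPairs (X : Finset (β × γ)) : Finset ((β × γ) × (β × γ)) :=
  {x ∈ X.offDiag | x.1.1 = x.2.1}

def crossClassPairs (X : Finset (β × γ)) : Finset ((β × γ) × (β × γ)) :=
  {x ∈ X.offDiag | x.1.1 ≠ x.2.1}

lemma card_sameClassPairs_add_card_crossClassPairs (X : Finset (β × γ)) :
    (#(sameClassPairs X) : ℚ) + #(crossClassPairs X) = #X * (#X - 1) := by
  rw [← cast_card_offDiag, ← Nat.cast_add]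
  exact_mod_cast card_filter_add_card_filter_not _

lemma card_sameClassPairs [Fintype β] (X : Finset (β × γ)) :
    (#(sameClassPairs X) : ℚ) = ∑ i, (#{x ∈ X | x.1 = i} : ℚ) * (#{x ∈ X | x.1 = i} - 1) := by
  rw [card_eq_sum_card_fiberwise (f := fun x => x.1.1) (t := univ) fun _ _ => mem_univ _,
    Nat.cast_sum]
  refine sum_congr rfl fun i _ => ?_
  rw [← cast_card_offDiag]
  congr 2
  ext x
  simp only [sameClassPairs, mem_filter, mem_offDiag]
  constructor
  · rintro ⟨⟨⟨h1, h2, hne⟩, h12⟩, rfl⟩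
    exact ⟨⟨h1, rfl⟩, ⟨h2, h12.symm⟩, hne⟩
  · rintro ⟨⟨h1, rfl⟩, ⟨h2, h12⟩, hne⟩
    exact ⟨⟨⟨h1, h2, hne⟩, h12.symm⟩, rfl⟩

variable [Fintype β] [Fintype γ]

lemma card_sameClassPairs_univ :
    (#(sameClassPairs (univ : Finset (β × γ))) : ℚ) =
      Fintype.card β * (Fintype.card γ * (Fintype.card γ - 1)) := by
  have hfib : ∀ i : β, #{x ∈ (univ : Finset (β × γ)) | x.1 = i} = Fintype.card γ := fun i => by
    rw [← univ_product_univ, filter_product_left (· = i), filter_eq', if_pos (mem_univ i)]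
    simp
  simp [card_sameClassPairs, hfib]

lemma card_crossClassPairs_univ :
    (#(crossClassPairs (univ : Finset (β × γ))) : ℚ) =
      Fintype.card β * Fintype.card γ * (Fintype.card γ * (Fintype.card β - 1)) := by
  have h := card_sameClassPairs_add_card_crossClassPairs (univ : Finset (β × γ))
  rw [card_sameClassPairs_univ, card_univ, Fintype.card_prod, Nat.cast_mul] at h
  linear_combination h

end ClassPairs

lemma eq_iff_of_double_counting {c d N T T' K lE lN : ℚ} (hc : 1 < c) (hd : 1 < d) (hN : N ≠ 0)
    (hE : d * (c * (c - 1)) * lE = N * T) (hX : d * c * (c * (d - 1)) * lN = N * T')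
    (hK : T + T' = K) : lE = lN ↔ T = K * (c - 1) / (c * d - 1) := by
  have hc0 : 0 < c - 1 := sub_pos.2 hc
  have hd0 : 0 < d - 1 := sub_pos.2 hd
  have hNdc : N * d * c ≠ 0 := by positivity
  have hcd : c * d - 1 ≠ 0 := by nlinarith
  have hlE : lE = N * T / (d * (c * (c - 1))) :=
    eq_div_of_mul_eq (by positivity) (by rw [mul_comm, hE])
  have hlN : lN = N * T' / (d * c * (c * (d - 1))) :=
    eq_div_of_mul_eq (by positivity) (by rw [mul_comm, hX])
  rw [hlE, hlN, div_eq_div_iff (by positivity) (by positivity), eq_div_iff hcd, ← sub_eq_zero,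
    ← sub_eq_zero (a := T * _)]
  have key : N * T * (d * c * (c * (d - 1))) - N * T' * (d * (c * (c - 1))) =
      N * d * c * (T * (c * d - 1) - K * (c - 1)) := by
    rw [← hK]; ring
  rw [key, mul_eq_zero, or_iff_right hNdc]

section ImprimitiveWreath

variable (β γ : Type*)

/-- The wreath product `Perm γ ≀ Perm β` in its imprimitive action on `β × γ`, whose blocks of
imprimitivity are the classes `{i} × γ`. -/
def imprimitiveWreath : Subgroup (Perm (β × γ)) where
  carrier := {σ | ∃ (π : Perm β) (τ : β → Perm γ), σ = π.prodShear τ}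
  mul_mem' := by
    rintro _ _ ⟨π, τ, rfl⟩ ⟨π', τ', rfl⟩
    exact ⟨_, _, Perm.prodShear_mul_prodShear π π' τ τ'⟩
  one_mem' := ⟨1, 1, rfl⟩
  inv_mem' := by
    rintro _ ⟨π, τ, rfl⟩
    exact ⟨_, _, Perm.prodShear_inv π τ⟩

noncomputable instance [Finite β] [Finite γ] : Fintype (imprimitiveWreath β γ) :=
  Fintype.ofFinite _

variable {β γ}

lemma fst_apply_eq_iff {σ : Perm (β × γ)} (hσ : σ ∈ imprimitiveWreath β γ) (x y : β × γ) :
    (σ x).1 = (σ y).1 ↔ x.1 = y.1 := by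
  obtain ⟨π, τ, rfl⟩ := hσ
  exact π.injective.eq_iff

variable [DecidableEq β] [DecidableEq γ]

lemma exists_mem_imprimitiveWreath_apply_eq {p q p' q' : β × γ} (hpq : p ≠ q) (hpq' : p' ≠ q')
    (hfst : p.1 = q.1 ↔ p'.1 = q'.1) :
    ∃ σ ∈ imprimitiveWreath β γ, σ p = p' ∧ σ q = q' := by
  by_cases h : p.1 = q.1
  · have h' := hfst.1 h
    obtain ⟨τ, hτp, hτq⟩ := MulAction.is_two_pretransitive_iff.1
      (Perm.isMultiplyPretransitive γ 2) (fun h₂ => hpq (Prod.ext h h₂))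
      (fun h₂ => hpq' (Prod.ext h' h₂))
    refine ⟨(swap p.1 p'.1).prodShear fun _ => τ, ⟨_, _, rfl⟩, ?_, ?_⟩
    · exact Prod.ext (swap_apply_left _ _) hτp
    · exact Prod.ext (by simp [← h, h']) hτq
  · obtain ⟨π, hπp, hπq⟩ := MulAction.is_two_pretransitive_iff.1
      (Perm.isMultiplyPretransitive β 2) h (mt hfst.2 h)
    refine ⟨π.prodShear fun i => if i = p.1 then swap p.2 p'.2 else swap q.2 q'.2,
      ⟨_, _, rfl⟩, ?_, ?_⟩
    · exact Prod.ext hπp (by simp)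
    · exact Prod.ext hπq (by simp [Ne.symm h])

variable [Fintype β] [Fintype γ] {B : Finset (β × γ)}

local notation "W" => imprimitiveWreath β γ

lemma mem_orbitBlocks_imprimitiveWreath {C : Finset (β × γ)} :
    C ∈ orbitBlocks W B ↔
      ∃ (π : Perm β) (τ : β → Perm γ), C = B.image fun x => (π x.1, τ x.1 x.2) := by
  simp only [mem_orbitBlocks, Subtype.exists, smul_finset_def, Subgroup.mk_smul, Perm.smul_def]
  constructor
  · rintro ⟨_, ⟨π, τ, rfl⟩, rfl⟩
    exact ⟨π, τ, rfl⟩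
  · rintro ⟨π, τ, rfl⟩
    exact ⟨_, ⟨π, τ, rfl⟩, rfl⟩

lemma natCard_eq_pairCount (p q : β × γ) :
    Nat.card {C : Finset (β × γ) //
      (∃ (π : Perm β) (τ : β → Perm γ), C = B.image fun x => (π x.1, τ x.1 x.2)) ∧
        p ∈ C ∧ q ∈ C} = pairCount W B p q := by
  rw [Nat.card_eq_fintype_card, Fintype.card_subtype, pairCount]
  congr 1
  ext C
  simp only [mem_filter, mem_univ, true_and, mem_orbitBlocks_imprimitiveWreath]

lemma pairCount_eq_of_fst_eq_iff {p q p' q' : β × γ} (hpq : p ≠ q) (hpq' : p' ≠ q')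
    (hfst : p.1 = q.1 ↔ p'.1 = q'.1) : pairCount W B p q = pairCount W B p' q' := by
  obtain ⟨σ, hσ, rfl, rfl⟩ := exists_mem_imprimitiveWreath_apply_eq hpq hpq' hfst
  exact (pairCount_smul (⟨σ, hσ⟩ : W) p q).symm

lemma card_mul_pairCount_imprimitiveWreath {S : Finset ((β × γ) × (β × γ))} {p q : β × γ}
    (hpq : p ≠ q) (hS : ∀ y, y ∈ S ↔ y.1 ≠ y.2 ∧ (y.1.1 = y.2.1 ↔ p.1 = q.1)) :
    #S * pairCount W B p q = #(orbitBlocks W B) * #{y ∈ S | y.1 ∈ B ∧ y.2 ∈ B} := by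
  refine card_mul_pairCount (x := (p, q)) (fun g y hy => ?_) (fun y hy z hz => ?_) ?_
  · rw [hS] at hy ⊢
    exact ⟨(g : Perm (β × γ)).injective.ne hy.1, (fst_apply_eq_iff g.2 _ _).trans hy.2⟩
  · rw [hS] at hy hz
    obtain ⟨σ, hσ, h1, h2⟩ :=
      exists_mem_imprimitiveWreath_apply_eq hy.1 hz.1 (hy.2.trans hz.2.symm)
    exact ⟨⟨σ, hσ⟩, Prod.ext h1 h2⟩
  · exact (hS _).2 ⟨hpq, Iff.rfl⟩

lemma card_sameClassPairs_univ_mul_pairCount {p q : β × γ} (hpq : p ≠ q) (h : p.1 = q.1) :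
    #(sameClassPairs (univ : Finset (β × γ))) * pairCount W B p q =
      #(orbitBlocks W B) * #(sameClassPairs B) := by
  rw [card_mul_pairCount_imprimitiveWreath hpq fun y => by simp [sameClassPairs, h]]
  congr 2
  ext y
  simp only [sameClassPairs, mem_filter, mem_offDiag, mem_univ, ne_eq, true_and]
  tauto

lemma card_crossClassPairs_univ_mul_pairCount {p q : β × γ} (h : p.1 ≠ q.1) :
    #(crossClassPairs (univ : Finset (β × γ))) * pairCount W B p q =
      #(orbitBlocks W B) * #(crossClassPairs B) := by
  rw [card_mul_pairCount_imprimitiveWreath (fun hpq => h (congrArg Prod.fst hpq))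
    fun y => by simp [crossClassPairs, h]]
  congr 2
  ext y
  simp only [crossClassPairs, ne_eq, mem_filter, mem_offDiag, mem_univ, true_and]
  tauto

theorem pairCount_eq_pairCount_iff {p q p' q' : β × γ} (hpq : p ≠ q) (h : p.1 = q.1)
    (h' : p'.1 ≠ q'.1) :
    pairCount W B p q = pairCount W B p' q' ↔
      ∑ i, (#{x ∈ B | x.1 = i} : ℚ) * (#{x ∈ B | x.1 = i} - 1) =
        #B * (#B - 1) * (Fintype.card γ - 1) / (Fintype.card γ * Fintype.card β - 1) := by
  have hsame := card_sameClassPairs_univ_mul_pairCount (B := B) hpq h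
  have hcross := card_crossClassPairs_univ_mul_pairCount (B := B) h'
  have hN : (#(orbitBlocks W B) : ℚ) ≠ 0 :=
    Nat.cast_ne_zero.2 (card_ne_zero_of_mem self_mem_orbitBlocks)
  rw [← card_sameClassPairs, ← Nat.cast_inj (R := ℚ)]
  refine eq_iff_of_double_counting ?_ ?_ hN ?_ ?_ (card_sameClassPairs_add_card_crossClassPairs B)
  · exact_mod_cast Fintype.one_lt_card_iff.2 ⟨p.2, q.2, fun h₂ => hpq (Prod.ext h h₂)⟩
  · exact_mod_cast Fintype.one_lt_card_iff.2 ⟨p'.1, q'.1, h'⟩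
  · rw [← card_sameClassPairs_univ]; exact_mod_cast hsame
  · rw [← card_crossClassPairs_univ]; exact_mod_cast hcross

theorem exists_forall_pairCount_eq_iff (hγ : 1 < Fintype.card γ) (hβ : 1 < Fintype.card β) :
    (∃ lam : ℕ, ∀ p q : β × γ, p ≠ q → pairCount W B p q = lam) ↔
      ∑ i, (#{x ∈ B | x.1 = i} : ℚ) * (#{x ∈ B | x.1 = i} - 1) =
        #B * (#B - 1) * (Fintype.card γ - 1) / (Fintype.card γ * Fintype.card β - 1) := by
  obtain ⟨a, b, hab⟩ := Fintype.exists_pair_of_one_lt_card hγ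
  obtain ⟨i, j, hij⟩ := Fintype.exists_pair_of_one_lt_card hβ
  have hsame : ((i, a) : β × γ) ≠ (i, b) := fun h => hab (congrArg Prod.snd h)
  have hcross : ((i, a) : β × γ) ≠ (j, a) := fun h => hij (congrArg Prod.fst h)
  rw [← pairCount_eq_pairCount_iff (p' := (i, a)) (q' := (j, a)) hsame rfl hij]
  constructor
  · rintro ⟨lam, hlam⟩
    exact (hlam _ _ hsame).trans (hlam _ _ hcross).symm
  · intro heq
    refine ⟨pairCount W B (i, a) (i, b), fun p q hpq => ?_⟩
    by_cases h : p.1 = q.1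
    · exact pairCount_eq_of_fst_eq_iff hpq hsame (iff_of_true h rfl)
    · exact (pairCount_eq_of_fst_eq_iff hpq hcross (iff_of_false h hij)).trans heq.symm

end ImprimitiveWreath

/-- Cameron–Praeger criterion (2-designs): with points `Fin d × Fin c` partitioned into the
`d` classes `{i} × Fin c`, a `k`-set `B` with intersection sizes `xᵢ = |B ∩ Δᵢ|`, the orbit
design `(P, B^{S_c ≀ S_d})` is a 2-design iff `Σ xᵢ(xᵢ−1) = k(k−1)(c−1)/(v−1)`, `v = cd`. -/
theorem stmt_10 (c d k : ℕ) (hc : 1 < c) (hd : 1 < d)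
    (B : Finset (Fin d × Fin c)) (hB : B.card = k) :
    (∃ lam : ℕ, ∀ p q : Fin d × Fin c, p ≠ q →
        Nat.card {C : Finset (Fin d × Fin c) //
          (∃ (π : Equiv.Perm (Fin d)) (τ : Fin d → Equiv.Perm (Fin c)),
            C = B.image (fun x => (π x.1, τ x.1 x.2))) ∧ p ∈ C ∧ q ∈ C} = lam) ↔
      (∑ i : Fin d, (((B.filter (fun x => x.1 = i)).card : ℚ) *
          (((B.filter (fun x => x.1 = i)).card : ℚ) - 1)) =
        (k : ℚ) * ((k : ℚ) - 1) * ((c : ℚ) - 1) / ((c : ℚ) * (d : ℚ) - 1)) := by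
  subst hB
  simp only [natCard_eq_pairCount]
  have h := exists_forall_pairCount_eq_iff (B := B) (by rwa [Fintype.card_fin])
    (by rwa [Fintype.card_fin])
  rwa [Fintype.card_fin, Fintype.card_fin] at h
end
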